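/- The hat guessing game on the star K_{1,n} with center hatness H and s center guesses, and leaf hatness s+1 with 1 guess per leaf, is winning if and only if a perfect hash family PHF(n; H, s+1, s+1) exists. -/
import Mathlib


/-- A winning strategy in the hat guessing game `⟨G, h, g⟩`: each sage `v` deterministically
outputs at most `g v` guesses depending only on the hat colors of its neighbors, and for
every hat assignment (with `c v < h v`) some sage's guess set contains its own color. -/
def HatWinning {V : Type*} (G : SimpleGraph V) (h g : V → ℕ) : Prop :=
  ∃ σ : V → (V → ℕ) → Finset ℕ,
    (∀ v c c', (∀ u, G.Adj v u → c u = c' u) → σ v c = σ v c') ∧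
    (∀ v c, (σ v c).card ≤ g v) ∧
    ∀ c : V → ℕ, (∀ v, c v < h v) → ∃ v, c v ∈ σ v c

/-- The hat guessing game played by the sages occupying the vertices of `S` only
(the game on the induced subgraph `G[S]`). -/
def HatWinningOn {V : Type*} (G : SimpleGraph V) (S : Set V) (h g : V → ℕ) : Prop :=
  ∃ σ : V → (V → ℕ) → Finset ℕ,
    (∀ v ∈ S, ∀ c c', (∀ u ∈ S, G.Adj v u → c u = c' u) → σ v c = σ v c') ∧
    (∀ v ∈ S, ∀ c, (σ v c).card ≤ g v) ∧
    ∀ c : V → ℕ, (∀ v ∈ S, c v < h v) → ∃ v ∈ S, c v ∈ σ v c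

/-- The star `K_{1,n}`: center `0 : Fin (n+1)` adjacent to the `n` other vertices (the leaves). -/
def starGraph (n : ℕ) : SimpleGraph (Fin (n + 1)) :=
  SimpleGraph.fromRel (fun x _ => x = 0)

/-- `M` is a perfect hash family `PHF(N; k, v, t)`: an `N × k` array on `v` symbols such that
for every choice of `t` distinct columns some row takes distinct values on them. -/
def IsPHF (N k v t : ℕ) (M : Fin N → Fin k → Fin v) : Prop :=
  ∀ cols : Fin t → Fin k, Function.Injective cols →
    ∃ r : Fin N, Function.Injective (fun j => M r (cols j))

lemma star_adj (n : ℕ) (v u : Fin (n+1)) :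
    (starGraph n).Adj v u ↔ v ≠ u ∧ (v = 0 ∨ u = 0) :=
  SimpleGraph.fromRel_adj _ v u

lemma phf_card_le {n s H : ℕ} (M : Fin n → Fin H → Fin (s+1))
    (hM : IsPHF n H (s+1) (s+1) M) (d : Fin n → ℕ) (hd : ∀ i, d i < s+1) :
    (Finset.univ.filter (fun x : Fin H => ∀ i, (M i x : ℕ) ≠ d i)).card ≤ s := by
  by_contra hc
  push_neg at hc
  obtain ⟨T, hTsub, hTcard⟩ := Finset.exists_subset_card_eq (show s+1 ≤ _ from hc)
  set cols : Fin (s+1) → Fin H := fun j => (T.orderIsoOfFin hTcard j : Fin H) with hcols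
  have hinj : Function.Injective cols :=
    Subtype.coe_injective.comp (T.orderIsoOfFin hTcard).injective
  obtain ⟨r, hr⟩ := hM cols hinj
  obtain ⟨j, hj⟩ := Finite.injective_iff_surjective.mp hr ⟨d r, hd r⟩
  have hmem : cols j ∈ T := (T.orderIsoOfFin hTcard j).2
  have h2 := (Finset.mem_filter.mp (hTsub hmem)).2 r
  simp only at hj
  rw [hj] at h2
  exact h2 rfl

/-- The game on `K_{1,n}` with center hatness `H`, `s` center guesses,
leaf hatness `s+1` and one guess per leaf is winning iff a `PHF(n; H, s+1, s+1)` exists. -/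
theorem star_winning_iff_PHF (n s H : ℕ) (hs : 0 < s) (hH : 0 < H) :
    HatWinning (starGraph n)
        (fun x => if x = 0 then H else s + 1) (fun x => if x = 0 then s else 1) ↔
      ∃ M : Fin n → Fin H → Fin (s + 1), IsPHF n H (s + 1) (s + 1) M := by
  classical
  constructor
  · rintro ⟨σ, hloc, hcard, hwin⟩
    refine ⟨fun i x =>
      if h : ∃ y : Fin (s+1), (y:ℕ) ∈ σ i.succ (fun _ => (x:ℕ)) then h.choose else 0, ?_⟩
    set M : Fin n → Fin H → Fin (s+1) := fun i x =>
      if h : ∃ y : Fin (s+1), (y:ℕ) ∈ σ i.succ (fun _ => (x:ℕ)) then h.choose else 0 with hMdef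
    intro cols hinj
    by_contra hno
    push_neg at hno
    have hy : ∀ r : Fin n, ∃ y : Fin (s+1), ∀ j, M r (cols j) ≠ y := by
      intro r
      by_contra hcon
      push_neg at hcon
      exact hno r (Finite.injective_iff_surjective.mpr fun y => hcon y)
    choose y hy using hy
    set T : Finset ℕ := σ 0 (Fin.cases 0 (fun i => (y i : ℕ))) with hT
    have hTcard : T.card ≤ s := by
      have := hcard 0 (Fin.cases 0 (fun i => (y i : ℕ)))
      simpa using this
    have hex : ∃ j0 : Fin (s+1), (cols j0 : ℕ) ∉ T := by
      by_contra hall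
      push_neg at hall
      have hsub : (Finset.univ.image (fun j : Fin (s+1) => (cols j : ℕ))) ⊆ T := by
        intro a ha
        obtain ⟨j, _, rfl⟩ := Finset.mem_image.mp ha
        exact hall j
      have h1 : (Finset.univ.image (fun j : Fin (s+1) => (cols j : ℕ))).card ≤ T.card :=
        Finset.card_le_card hsub
      rw [Finset.card_image_of_injective _
        (show Function.Injective fun j : Fin (s+1) => ((cols j : Fin H) : ℕ) from
          fun a b h => hinj (Fin.val_injective h))] at h1
      simp at h1
      omega
    obtain ⟨j0, hj0⟩ := hex
    set c : Fin (n+1) → ℕ := Fin.cases ((cols j0 : ℕ)) (fun i => (y i : ℕ)) with hc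
    have hbound : ∀ v, c v < (if v = 0 then H else s+1) := by
      intro v
      induction v using Fin.cases with
      | zero => simpa [hc] using (cols j0).2
      | succ i => simpa [hc, Fin.succ_ne_zero] using (y i).2
    obtain ⟨v, hv⟩ := hwin c hbound
    rcases Fin.eq_zero_or_eq_succ v with rfl | ⟨i, rfl⟩
    · -- center guessed correctly: contradiction with hj0
      have hloc0 : σ 0 c = T := by
        apply hloc
        intro u hu
        have hu0 : u ≠ 0 := by
          rcases (star_adj n 0 u).mp hu with ⟨hne, _⟩
          exact fun h => hne h.symm
        obtain ⟨i, rfl⟩ := Fin.exists_succ_eq.mpr hu0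
        simp [hc]
      rw [hloc0] at hv
      simp only [hc, Fin.cases_zero] at hv
      exact hj0 hv
    · -- leaf i guessed correctly: contradiction with hy
      have hloci : σ i.succ c = σ i.succ (fun _ => ((cols j0 : Fin H) : ℕ)) := by
        apply hloc
        intro u hu
        have hu0 : u = 0 := by
          rcases (star_adj n i.succ u).mp hu with ⟨_, h | h⟩
          · exact absurd h (Fin.succ_ne_zero i)
          · exact h
        subst hu0
        simp [hc]
      rw [hloci] at hv
      simp only [hc, Fin.cases_succ] at hv
      have hEx : ∃ z : Fin (s+1), (z:ℕ) ∈ σ i.succ (fun _ => ((cols j0 : Fin H) : ℕ)) :=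
        ⟨y i, hv⟩
      have hMval : M i (cols j0) = hEx.choose := by
        rw [hMdef]
        exact dif_pos hEx
      have hspec := hEx.choose_spec
      have hcard1 : (σ i.succ (fun _ => ((cols j0 : Fin H) : ℕ))).card ≤ 1 := by
        have := hcard i.succ (fun _ => ((cols j0 : Fin H) : ℕ))
        simpa [Fin.succ_ne_zero] using this
      have heq : (hEx.choose : ℕ) = (y i : ℕ) :=
        Finset.card_le_one.mp hcard1 _ hspec _ hv
      exact hy i j0 (by rw [hMval]; exact Fin.val_injective heq)
  · rintro ⟨M, hM⟩
    refine ⟨Fin.cases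
      (fun c => (Finset.univ.filter
          (fun x : Fin H => ∀ i : Fin n, (M i x : ℕ) ≠ c i.succ % (s+1))).image
          (fun x : Fin H => (x:ℕ)))
      (fun i c => if h : c 0 < H then {(M i ⟨c 0, h⟩ : ℕ)} else ∅), ?_, ?_, ?_⟩
    · intro v c c' hagree
      induction v using Fin.cases with
      | zero =>
        have hA : ∀ i : Fin n, c i.succ = c' i.succ := by
          intro i
          apply hagree
          rw [star_adj]
          exact ⟨(Fin.succ_ne_zero i).symm, Or.inl rfl⟩
        simp only [Fin.cases_zero, hA]
      | succ i =>
        have hA : c 0 = c' 0 := by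
          apply hagree
          rw [star_adj]
          exact ⟨Fin.succ_ne_zero i, Or.inr rfl⟩
        simp only [Fin.cases_succ, hA]
    · intro v c
      induction v using Fin.cases with
      | zero =>
        simp only [Fin.cases_zero, if_pos rfl]
        refine le_trans (Finset.card_image_le) ?_
        exact phf_card_le M hM (fun i => c i.succ % (s+1)) (fun i => Nat.mod_lt _ (by omega))
      | succ i =>
        simp only [Fin.cases_succ, if_neg (Fin.succ_ne_zero i)]
        split
        · simp
        · simp
    · intro c hc
      have h0 : c 0 < H := by simpa using hc 0
      have hi : ∀ i : Fin n, c i.succ < s+1 := by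
        intro i
        simpa [Fin.succ_ne_zero] using hc i.succ
      by_cases hEx : ∃ i : Fin n, (M i ⟨c 0, h0⟩ : ℕ) = c i.succ
      · obtain ⟨i, hi'⟩ := hEx
        refine ⟨i.succ, ?_⟩
        simp only [Fin.cases_succ, dif_pos h0]
        simp [hi']
      · push_neg at hEx
        refine ⟨0, ?_⟩
        simp only [Fin.cases_zero]
        apply Finset.mem_image.mpr
        refine ⟨⟨c 0, h0⟩, ?_, rfl⟩
        simp only [Finset.mem_filter, Finset.mem_univ, true_and]
        intro i
        rw [Nat.mod_eq_of_lt (hi i)]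
        exact hEx i
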